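/- (Contractivity of the population EM operator under strong concavity and first-order stability, Theorem 2.) Let d ≥ 1, r > 0, θ* ∈ ℝ^d, and 0 ≤ γ < λ. Let Q : ℝ^d × ℝ^d → ℝ, written Q(θ'|θ), be such that θ' ↦ Q(θ'|θ) is differentiable for each θ, θ' ↦ Q(θ'|θ*) is λ-strongly concave on ℝ^d, and the gradient of Q(·|θ*) vanishes at θ* (θ* maximizes Q(·|θ*)). Let M : B(r;θ*) → ℝ^d satisfy ∇_{θ'}Q(M(θ)|θ) = 0 for every θ ∈ B(r;θ*), and suppose the first-order stability condition FOS(γ) holds: ‖∇_{θ'}Q(M(θ)|θ*) − ∇_{θ'}Q(M(θ)|θ)‖ ≤ γ‖θ − θ*‖ for all θ ∈ B(r;θ*). Then ‖M(θ) − θ*‖ ≤ (γ/λ)‖θ − θ*‖ for all θ ∈ B(r;θ*). -/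
import Mathlib


open scoped RealInnerProductSpace

noncomputable section

abbrev Vec (d : ℕ) := EuclideanSpace ℝ (Fin d)

/-- A differentiable function `f` is `λ`-strongly concave if
`f y ≤ f x + ⟨∇f x, y − x⟩ − (λ/2)‖y − x‖²` for all `x, y`. -/
def StronglyConcave {d : ℕ} (f : Vec d → ℝ) (lam : ℝ) : Prop :=
  ∀ x y : Vec d, f y ≤ f x + ⟪gradient f x, y - x⟫ - lam / 2 * ‖y - x‖ ^ 2

/-- **Theorem 2 (Balakrishnan–Wainwright–Yu):** contractivity of the population EM
operator under strong concavity and first-order stability. -/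
theorem population_EM_operator_contractive
    (d : ℕ) (hd : 1 ≤ d) (r : ℝ) (hr : 0 < r) (θs : Vec d)
    (γ lam : ℝ) (hγ : 0 ≤ γ) (hγlam : γ < lam)
    (Q : Vec d → Vec d → ℝ)
    (hQdiff : ∀ θ : Vec d, Differentiable ℝ (fun θ' => Q θ' θ))
    (hQconc : StronglyConcave (fun θ' => Q θ' θs) lam)
    (hQmax : gradient (fun θ' => Q θ' θs) θs = 0)
    (M : Vec d → Vec d)
    (hM : ∀ θ : Vec d, ‖θ - θs‖ ≤ r → gradient (fun θ' => Q θ' θ) (M θ) = 0)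
    (hFOS : ∀ θ : Vec d, ‖θ - θs‖ ≤ r →
      ‖gradient (fun θ' => Q θ' θs) (M θ) - gradient (fun θ' => Q θ' θ) (M θ)‖ ≤
        γ * ‖θ - θs‖) :
    ∀ θ : Vec d, ‖θ - θs‖ ≤ r → ‖M θ - θs‖ ≤ γ / lam * ‖θ - θs‖ := by
  intro θ hθ
  have hlam : 0 < lam := lt_of_le_of_lt hγ hγlam
  set g := gradient (fun θ' => Q θ' θs) with hg
  have h1 := hQconc θs (M θ)
  have h2 := hQconc (M θ) θs
  rw [← hg] at h1 h2
  rw [hQmax] at h1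
  simp only [inner_zero_left] at h1
  have hnormrev : ‖θs - M θ‖ = ‖M θ - θs‖ := norm_sub_rev _ _
  rw [hnormrev] at h2
  have key : lam * ‖M θ - θs‖ ^ 2 ≤ ⟪g (M θ), θs - M θ⟫ := by
    nlinarith [h1, h2]
  have hCS : ⟪g (M θ), θs - M θ⟫ ≤ ‖g (M θ)‖ * ‖θs - M θ‖ :=
    real_inner_le_norm _ _
  have hgb : ‖g (M θ)‖ ≤ γ * ‖θ - θs‖ := by
    have := hFOS θ hθ
    rwa [hM θ hθ, sub_zero] at this
  have hchain : lam * ‖M θ - θs‖ ^ 2 ≤ γ * ‖θ - θs‖ * ‖M θ - θs‖ := by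
    calc lam * ‖M θ - θs‖ ^ 2 ≤ ⟪g (M θ), θs - M θ⟫ := key
    _ ≤ ‖g (M θ)‖ * ‖θs - M θ‖ := hCS
    _ = ‖g (M θ)‖ * ‖M θ - θs‖ := by rw [hnormrev]
    _ ≤ γ * ‖θ - θs‖ * ‖M θ - θs‖ :=
        mul_le_mul_of_nonneg_right hgb (norm_nonneg _)
  rcases eq_or_lt_of_le (norm_nonneg (M θ - θs)) with h0 | h0
  · rw [← h0]
    positivity
  · rw [div_mul_eq_mul_div, le_div_iff₀ hlam]
    nlinarith [hchain, h0]
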